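/- arXiv:1702.04888 — 7 statements merged into one kernel-verified Lean document; each statement's English description precedes it below -/
import Mathlib

section
/- Let u, ρ, σ, τ be complex numbers with |u| = 1, and let R₁, R₂, R₃ be as in the standard parameterization of a complex hyperbolic triangle group. Then trace(R₁·R₃⁻¹·R₂·R₃) = u(2 − |στ − conj(ρ)|²) + conj(u)². -/
/-! Since `|u| = 1`, `conj u = u⁻¹`, so `R₃⁻¹` has the same shape as `R₃` and the trace is a
polynomial in `u`, `conj u` and the remaining parameters and their conjugates, which agrees with
the claimed one modulo `u * conj u = 1`; finally `|στ - conj ρ|² = (στ - conj ρ)(conj σ conj τ - ρ)`. -/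

open ComplexConjugate

theorem Matrix.inv_diagonal_add_lastRow {R : Type*} [CommRing R] {a b : R} (hab : a * b = 1)
    (x y : R) :
    (!![b, 0, 0; 0, b, 0; x, y, a ^ 2])⁻¹ = !![a, 0, 0; 0, a, 0; -x * b, -y * b, b ^ 2] := by
  refine Matrix.inv_eq_right_inv ?_
  ext i j
  fin_cases i <;> fin_cases j <;> simp [Matrix.mul_apply, Fin.sum_univ_three] <;> grind

/-- `r'`, `s'`, `t'` play the roles of `conj ρ`, `conj σ`, `conj τ`. -/
theorem trace_R₁_R₃inv_R₂_R₃ {R : Type*} [CommRing R] {a b : R} (hab : a * b = 1)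
    (r r' s s' t t' : R) :
    Matrix.trace (!![a ^ 2, r, -a * t'; 0, b, 0; 0, 0, b] * !![b, 0, 0; 0, b, 0; t, -a * s', a ^ 2]⁻¹
      * !![b, 0, 0; -a * r', a ^ 2, s; 0, 0, b] * !![b, 0, 0; 0, b, 0; t, -a * s', a ^ 2]) =
      a * (2 - (s * t - r') * (s' * t' - r)) + b ^ 2 := by
  rw [Matrix.inv_diagonal_add_lastRow hab, Matrix.trace_fin_three]
  simp only [Matrix.mul_apply, Fin.sum_univ_three, Matrix.of_apply, Matrix.cons_val',
    Matrix.cons_val_zero, Matrix.cons_val_one, Matrix.cons_val_two, Matrix.empty_val',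
    Matrix.cons_val_fin_one, Matrix.tail_cons, Matrix.vecHead]
  linear_combination (-a * t * t' * s * s' - a * r * r' + a ^ 2 * b * s * s'
    + (a * t' * s' * r' + 2 * a + b ^ 2) * (a * b + 1)) * hab

theorem stmt_5 (u ρ σ τ : ℂ) (hu : ‖u‖ = 1)
    (R₁ R₂ R₃ : Matrix (Fin 3) (Fin 3) ℂ)
    (hR₁ : R₁ = !![u^2, ρ, -u * starRingEnd ℂ τ; 0, starRingEnd ℂ u, 0; 0, 0, starRingEnd ℂ u])
    (hR₂ : R₂ = !![starRingEnd ℂ u, 0, 0; -u * starRingEnd ℂ ρ, u^2, σ; 0, 0, starRingEnd ℂ u])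
    (hR₃ : R₃ = !![starRingEnd ℂ u, 0, 0; 0, starRingEnd ℂ u, 0; τ, -u * starRingEnd ℂ σ, u^2]) :
    Matrix.trace (R₁ * R₃⁻¹ * R₂ * R₃) =
      u * (2 - (‖σ * τ - starRingEnd ℂ ρ‖ : ℂ)^2) + (starRingEnd ℂ u)^2 := by
  have hu' : u * conj u = 1 := by rw [Complex.mul_conj', hu, Complex.ofReal_one, one_pow]
  rw [hR₁, hR₂, hR₃, trace_R₁_R₃inv_R₂_R₃ hu', ← Complex.mul_conj']
  simp only [map_sub, map_mul, Complex.conj_conj]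
end

section
/- Let u and ρ be complex numbers with |u| = 1, set σ = τ = √(ρ + conj(ρ)) (assuming ρ + conj(ρ) ≥ 0 real), and define S = [[ρ, u(1 − ρ − conj(ρ)), u²√(ρ+conj(ρ))],[conj(u), 0, 0],[0, conj(u)√(ρ+conj(ρ)), −1]]. Then S² = R₁R₂R₃, where R₁ = [[u², ρ, −u√(ρ+conj(ρ))],[0, conj(u), 0],[0, 0, conj(u)]], R₂ = [[conj(u), 0, 0],[−u·conj(ρ), u², √(ρ+conj(ρ))],[0, 0, conj(u)]], R₃ = [[conj(u), 0, 0],[0, conj(u), 0],[√(ρ+conj(ρ)), −u√(ρ+conj(ρ)), u²]]. -/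
/-!
All entries are polynomials in `u, ū, ρ, ρ̄, t`, and the identity already holds in any commutative
ring as soon as `ū u = 1` and `t² = ρ + ρ̄`; these two relations are exactly what `‖u‖ = 1` and the
choice `t = √(ρ + ρ̄)` provide.
-/

open Matrix in
theorem sq_symmetry_eq_mul_reflections {R : Type*} [CommRing R] (u v ρ ρ' t : R)
    (huv : v * u = 1) (ht : t ^ 2 = ρ + ρ') :
    !![ρ, u * (1 - ρ - ρ'), u ^ 2 * t; v, 0, 0; 0, v * t, -1] ^ 2 =
      !![u ^ 2, ρ, -u * t; 0, v, 0; 0, 0, v] * !![v, 0, 0; -u * ρ', u ^ 2, t; 0, 0, v] *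
        !![v, 0, 0; 0, v, 0; t, -u * t, u ^ 2] := by
  simp only [sq, mul_fin_three, EmbeddingLike.apply_eq_iff_eq, vecCons_inj, and_true]
  refine ⟨⟨?_, ?_, ?_⟩, ⟨?_, ?_, ?_⟩, ⟨?_, ?_, ?_⟩⟩
  · linear_combination (u * v - ρ) * ht + (ρ * ρ' - u * v) * huv
  · linear_combination ρ * u * ht - ρ * u * huv
  · linear_combination u ^ 2 * t * huv
  · linear_combination -v * ht + v * ρ' * huv
  · linear_combination v * u * ht - v * u * huv
  · ring
  · ring
  · linear_combination v * t * huv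
  · linear_combination -(1 + v * u) * huv

theorem Complex.conj_mul_self_of_norm_eq_one {u : ℂ} (hu : ‖u‖ = 1) : starRingEnd ℂ u * u = 1 := by
  rw [← Complex.inv_eq_conj hu, inv_mul_cancel₀ (norm_ne_zero_iff.mp (hu ▸ one_ne_zero))]

theorem Complex.sq_ofReal_sqrt_re_add_conj {ρ : ℂ} (hρ : 0 ≤ (ρ + starRingEnd ℂ ρ).re) :
    (Real.sqrt (ρ + starRingEnd ℂ ρ).re : ℂ) ^ 2 = ρ + starRingEnd ℂ ρ := by
  rw [← Complex.ofReal_pow, Real.sq_sqrt hρ, Complex.add_conj]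
  simp

theorem stmt_6 (u ρ : ℂ) (hu : ‖u‖ = 1)
    (hρ : 0 ≤ (ρ + starRingEnd ℂ ρ).re)
    (t : ℂ) (ht : t = (Real.sqrt ((ρ + starRingEnd ℂ ρ).re) : ℂ))
    (S R₁ R₂ R₃ : Matrix (Fin 3) (Fin 3) ℂ)
    (hS : S = !![ρ, u * (1 - ρ - starRingEnd ℂ ρ), u^2 * t;
                 starRingEnd ℂ u, 0, 0;
                 0, starRingEnd ℂ u * t, -1])
    (hR₁ : R₁ = !![u^2, ρ, -u * t; 0, starRingEnd ℂ u, 0; 0, 0, starRingEnd ℂ u])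
    (hR₂ : R₂ = !![starRingEnd ℂ u, 0, 0; -u * starRingEnd ℂ ρ, u^2, t; 0, 0, starRingEnd ℂ u])
    (hR₃ : R₃ = !![starRingEnd ℂ u, 0, 0; 0, starRingEnd ℂ u, 0; t, -u * t, u^2]) :
    S^2 = R₁ * R₂ * R₃ := by
  subst hS hR₁ hR₂ hR₃ ht
  exact sq_symmetry_eq_mul_reflections u (starRingEnd ℂ u) ρ (starRingEnd ℂ ρ) _
    (Complex.conj_mul_self_of_norm_eq_one hu) (Complex.sq_ofReal_sqrt_re_add_conj hρ)
end

section
/- With S, R₁, R₂, R₃ as in the 2-fold symmetric parameterization (σ = τ = √(ρ+conj(ρ))), one has S·R₁·S⁻¹ = R₁R₂R₁⁻¹, S·R₂·S⁻¹ = R₁R₃R₁R₃⁻¹R₁⁻¹, and S·R₃·S⁻¹ = R₁R₃R₁⁻¹. -/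
/-!
Only two facts about the complex parameters matter: `u * conj u = 1` and `t * t = ρ + conj ρ`.
Replacing `conj u` and `conj ρ` by independent variables `c` and `r`, the three relations become
identities between polynomial matrices over an arbitrary commutative ring modulo the ideal
`(u c - 1, t² - ρ - r)`. Once the inverses of `S`, `R₁`, `R₃` are written down explicitly, they are
checked entrywise.
-/

namespace SymmetricGenerators

variable {K : Type*} [CommRing K] (u c ρ r t : K)

def S : Matrix (Fin 3) (Fin 3) K := !![ρ, u * (1 - ρ - r), u ^ 2 * t; c, 0, 0; 0, c * t, -1]

def R₁ : Matrix (Fin 3) (Fin 3) K := !![u ^ 2, ρ, -u * t; 0, c, 0; 0, 0, c]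

def R₂ : Matrix (Fin 3) (Fin 3) K := !![c, 0, 0; -u * r, u ^ 2, t; 0, 0, c]

def R₃ : Matrix (Fin 3) (Fin 3) K := !![c, 0, 0; 0, c, 0; t, -u * t, u ^ 2]

variable {u c ρ r t}

theorem S_inv (hu : u * c = 1) (ht : t * t = ρ + r) :
    (S u c ρ r t)⁻¹ = !![0, u, 0; c, -ρ, u * t; t * c ^ 2, -ρ * t * c, t * t - 1] := by
  apply Matrix.inv_eq_right_inv
  simp only [S, Matrix.mul_fin_three, Matrix.one_fin_three, EmbeddingLike.apply_eq_iff_eq,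
    Matrix.vecCons_inj, and_true]
  grind

theorem R₁_inv (hu : u * c = 1) :
    (R₁ u c ρ t)⁻¹ = !![c ^ 2, -ρ * c, t; 0, u, 0; 0, 0, u] := by
  apply Matrix.inv_eq_right_inv
  simp only [R₁, Matrix.mul_fin_three, Matrix.one_fin_three, EmbeddingLike.apply_eq_iff_eq,
    Matrix.vecCons_inj, and_true]
  grind

theorem R₃_inv (hu : u * c = 1) :
    (R₃ u c t)⁻¹ = !![u, 0, 0; 0, u, 0; -t * c, t, c ^ 2] := by
  apply Matrix.inv_eq_right_inv
  simp only [R₃, Matrix.mul_fin_three, Matrix.one_fin_three, EmbeddingLike.apply_eq_iff_eq,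
    Matrix.vecCons_inj, and_true]
  grind

theorem S_mul_R₁_mul_S_inv (hu : u * c = 1) (ht : t * t = ρ + r) :
    S u c ρ r t * R₁ u c ρ t * (S u c ρ r t)⁻¹ =
      R₁ u c ρ t * R₂ u c r t * (R₁ u c ρ t)⁻¹ := by
  rw [S_inv hu ht, R₁_inv hu]
  simp only [S, R₁, R₂, Matrix.mul_fin_three, EmbeddingLike.apply_eq_iff_eq,
    Matrix.vecCons_inj, and_true]
  grind

theorem S_mul_R₂_mul_S_inv (hu : u * c = 1) (ht : t * t = ρ + r) :
    S u c ρ r t * R₂ u c r t * (S u c ρ r t)⁻¹ =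
      R₁ u c ρ t * R₃ u c t * R₁ u c ρ t * (R₃ u c t)⁻¹ * (R₁ u c ρ t)⁻¹ := by
  rw [S_inv hu ht, R₁_inv hu, R₃_inv hu]
  simp only [S, R₁, R₂, R₃, Matrix.mul_fin_three, EmbeddingLike.apply_eq_iff_eq,
    Matrix.vecCons_inj, and_true]
  grind

theorem S_mul_R₃_mul_S_inv (hu : u * c = 1) (ht : t * t = ρ + r) :
    S u c ρ r t * R₃ u c t * (S u c ρ r t)⁻¹ = R₁ u c ρ t * R₃ u c t * (R₁ u c ρ t)⁻¹ := by
  rw [S_inv hu ht, R₁_inv hu]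
  simp only [S, R₁, R₃, Matrix.mul_fin_three, EmbeddingLike.apply_eq_iff_eq,
    Matrix.vecCons_inj, and_true]
  grind

end SymmetricGenerators

open SymmetricGenerators in
theorem stmt_7 (u ρ : ℂ) (hu : ‖u‖ = 1)
    (hρ : 0 ≤ (ρ + starRingEnd ℂ ρ).re)
    (t : ℂ) (ht : t = (Real.sqrt ((ρ + starRingEnd ℂ ρ).re) : ℂ))
    (S R₁ R₂ R₃ : Matrix (Fin 3) (Fin 3) ℂ)
    (hS : S = !![ρ, u * (1 - ρ - starRingEnd ℂ ρ), u^2 * t;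
                 starRingEnd ℂ u, 0, 0;
                 0, starRingEnd ℂ u * t, -1])
    (hR₁ : R₁ = !![u^2, ρ, -u * t; 0, starRingEnd ℂ u, 0; 0, 0, starRingEnd ℂ u])
    (hR₂ : R₂ = !![starRingEnd ℂ u, 0, 0; -u * starRingEnd ℂ ρ, u^2, t; 0, 0, starRingEnd ℂ u])
    (hR₃ : R₃ = !![starRingEnd ℂ u, 0, 0; 0, starRingEnd ℂ u, 0; t, -u * t, u^2]) :
    S * R₁ * S⁻¹ = R₁ * R₂ * R₁⁻¹ ∧
    S * R₂ * S⁻¹ = R₁ * R₃ * R₁ * R₃⁻¹ * R₁⁻¹ ∧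
    S * R₃ * S⁻¹ = R₁ * R₃ * R₁⁻¹ := by
  have hu' : u * starRingEnd ℂ u = 1 := by
    rw [Complex.mul_conj, Complex.normSq_eq_norm_sq, hu]
    norm_num
  have ht' : t * t = ρ + starRingEnd ℂ ρ := by
    rw [ht, ← Complex.ofReal_mul, Real.mul_self_sqrt hρ, Complex.add_conj]
    simp
  subst hS hR₁ hR₂ hR₃
  exact ⟨S_mul_R₁_mul_S_inv hu' ht', S_mul_R₂_mul_S_inv hu' ht', S_mul_R₃_mul_S_inv hu' ht'⟩
end

section
/- Suppose ζ, η, a, b are real with cos(2ζ) = cos(2η), and 1 = cos(2ζ) − cos(2η) − cos(a−b) − cos(a+2b) − cos(2a+b). Then cos((a−b)/2)·cos((a+2b)/2)·cos((2a+b)/2) = 0. -/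
theorem stmt_10 (ζ η a b : ℝ) (h1 : Real.cos (2*ζ) = Real.cos (2*η))
    (h2 : 1 = Real.cos (2*ζ) - Real.cos (2*η) - Real.cos (a - b) -
      Real.cos (a + 2*b) - Real.cos (2*a + b)) :
    Real.cos ((a - b)/2) * Real.cos ((a + 2*b)/2) * Real.cos ((2*a + b)/2) = 0 := by
  have e1 : Real.cos (a - b) = 2 * Real.cos ((a-b)/2)^2 - 1 := by
    rw [← Real.cos_two_mul]; ring_nf
  have e2 : Real.cos (a + 2*b) = 2 * Real.cos ((a+2*b)/2)^2 - 1 := by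
    rw [← Real.cos_two_mul]; ring_nf
  have e3 : Real.cos (2*a + b) = 2 * Real.cos ((2*a+b)/2)^2 - 1 := by
    rw [← Real.cos_two_mul]; ring_nf
  have e4 : Real.cos ((2*a+b)/2) =
      Real.cos ((a-b)/2) * Real.cos ((a+2*b)/2) -
      Real.sin ((a-b)/2) * Real.sin ((a+2*b)/2) := by
    rw [← Real.cos_add]; ring_nf
  have s1 := Real.sin_sq_add_cos_sq ((a-b)/2)
  have s2 := Real.sin_sq_add_cos_sq ((a+2*b)/2)
  have key : Real.cos ((a-b)/2)^2 + Real.cos ((a+2*b)/2)^2 + Real.cos ((2*a+b)/2)^2 = 1 := by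
    linarith
  rw [e4] at key ⊢
  linear_combination (1/2)*key - (1/2)*(1 - Real.cos ((a+2*b)/2)^2)*s1 -
    (1/2)*Real.sin ((a-b)/2)^2*s2
end

section
/- For real a with cos(a) ≠ −1, if b is real and cos(b) + cos(a+b) = 1/2 − cos(a), then cos(a+2b) + 1 = (1/2 − cos(a))² / (1 + cos(a)). -/
theorem stmt_12 (a b : ℝ) (ha : Real.cos a ≠ -1)
    (h : Real.cos b + Real.cos (a + b) = 1/2 - Real.cos a) :
    Real.cos (a + 2*b) + 1 = (1/2 - Real.cos a)^2 / (1 + Real.cos a) := by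
  set c := Real.cos (a/2) with hc
  set d := Real.cos (a/2 + b) with hd
  have h2 : 1 + Real.cos a = 2 * c^2 := by
    have := Real.cos_sq (a/2)
    rw [hc]; rw [show 2 * (a/2) = a by ring] at this; nlinarith [this]
  have h1 : Real.cos b + Real.cos (a + b) = 2 * c * d := by
    have e1 : Real.cos b = d * c + Real.sin (a/2 + b) * Real.sin (a/2) := by
      conv_lhs => rw [show b = (a/2 + b) - a/2 by ring, Real.cos_sub]
    have e2 : Real.cos (a + b) = d * c - Real.sin (a/2 + b) * Real.sin (a/2) := by
      rw [show a + b = (a/2 + b) + a/2 by ring, Real.cos_add]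
    rw [e1, e2]; ring
  have h3 : Real.cos (a + 2*b) + 1 = 2 * d^2 := by
    have := Real.cos_sq (a/2 + b)
    rw [show 2 * (a/2 + b) = a + 2*b by ring] at this
    rw [hd]; nlinarith [this]
  have hc0 : c ≠ 0 := by
    intro h0
    apply ha
    have : 1 + Real.cos a = 0 := by rw [h2, h0]; ring
    linarith
  rw [h3, ← h, h1, h2]
  field_simp
end

section
/- If n is an integer with n ≥ 3 and cos(2π/3 − 4π/(3n))·(1 + 2cos(π/3 − 2π/(3n))) = 0, then n = 8. -/
theorem stmt_15 (n : ℤ) (hn : 3 ≤ n)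
    (h : Real.cos (2*Real.pi/3 - 4*Real.pi/(3*n)) *
      (1 + 2 * Real.cos (Real.pi/3 - 2*Real.pi/(3*n))) = 0) :
    n = 8 := by
  have hx : (3:ℝ) ≤ (n:ℝ) := by exact_mod_cast hn
  have hxpos : (0:ℝ) < (n:ℝ) := by linarith
  have hpi := Real.pi_pos
  -- second factor positive
  have harg : Real.pi/3 - 2*Real.pi/(3*(n:ℝ)) ∈ Set.Ioo (-(Real.pi/2)) (Real.pi/2) := by
    constructor
    · have : 2*Real.pi/(3*(n:ℝ)) ≤ 2*Real.pi/9 := by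
        apply div_le_div_of_nonneg_left (by linarith) (by linarith) (by linarith)
      nlinarith
    · have : 0 < 2*Real.pi/(3*(n:ℝ)) := by positivity
      nlinarith
  have hcos2 : 0 < Real.cos (Real.pi/3 - 2*Real.pi/(3*(n:ℝ))) :=
    Real.cos_pos_of_mem_Ioo harg
  have hfac : Real.cos (2*Real.pi/3 - 4*Real.pi/(3*(n:ℝ))) = 0 := by
    rcases mul_eq_zero.mp h with h1 | h2
    · exact h1
    · nlinarith
  rcases Real.cos_eq_zero_iff.mp hfac with ⟨k, hk⟩
  have hbound : 2*Real.pi/9 ≤ 2*Real.pi/3 - 4*Real.pi/(3*(n:ℝ)) ∧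
      2*Real.pi/3 - 4*Real.pi/(3*(n:ℝ)) < 2*Real.pi/3 := by
    constructor
    · have : 4*Real.pi/(3*(n:ℝ)) ≤ 4*Real.pi/9 := by
        apply div_le_div_of_nonneg_left (by linarith) (by linarith) (by linarith)
      linarith
    · have : 0 < 4*Real.pi/(3*(n:ℝ)) := by positivity
      linarith
  have hk0 : k = 0 := by
    have h1 : 2*Real.pi/9 ≤ (2*(k:ℝ)+1)*Real.pi/2 := by rw [← hk]; exact hbound.1
    have h2 : (2*(k:ℝ)+1)*Real.pi/2 < 2*Real.pi/3 := by rw [← hk]; exact hbound.2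
    have hlt : (2*(k:ℝ)+1) < 4/3 := by nlinarith
    have hgt : (4:ℝ)/9 ≤ (2*(k:ℝ)+1) := by nlinarith
    have ha : (-1:ℝ) < (k:ℝ) := by linarith
    have hb : (k:ℝ) < 1 := by linarith
    have hk1 : (-1:ℤ) < k := by exact_mod_cast ha
    have hk2 : k < 1 := by exact_mod_cast hb
    omega
  rw [hk0] at hk
  push_cast at hk
  have hne : (3:ℝ)*(n:ℝ) ≠ 0 := by positivity
  have hnr : (n:ℝ) = 8 := by
    field_simp at hk
    nlinarith [Real.pi_pos]
  exact_mod_cast hnr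
end

section
/- Let ρ = 1, u = e^{2πi/(3p)} for an integer p ≥ 2, σ = τ = √2, and let H be the Hermitian matrix [[α, β₁, conj(β₃)],[conj(β₁), α, β₂],[β₃, conj(β₂), α]] with α = √(2 − u³ − conj(u)³), β₁ = −i·conj(u)^{1/2}·ρ, β₂ = −i·conj(u)^{1/2}·σ, β₃ = −i·conj(u)^{1/2}·τ, where conj(u)^{1/2} = e^{−πi/(3p)}. Then det(H) = −2·sin(3π/p). -/
theorem stmt_18 (p : ℕ) (hp : 2 ≤ p)
    (u ρ σ τ α β₁ β₂ β₃ : ℂ)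
    (hu : u = Complex.exp (2 * Real.pi * Complex.I / (3 * p)))
    (hρ : ρ = 1) (hσ : σ = (Real.sqrt 2 : ℂ)) (hτ : τ = (Real.sqrt 2 : ℂ))
    (hα : α = (Real.sqrt (((2 : ℂ) - u^3 - (starRingEnd ℂ u)^3).re) : ℂ))
    (hβ₁ : β₁ = -Complex.I * Complex.exp (-(Real.pi * Complex.I) / (3 * p)) * ρ)
    (hβ₂ : β₂ = -Complex.I * Complex.exp (-(Real.pi * Complex.I) / (3 * p)) * σ)
    (hβ₃ : β₃ = -Complex.I * Complex.exp (-(Real.pi * Complex.I) / (3 * p)) * τ)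
    (H : Matrix (Fin 3) (Fin 3) ℂ)
    (hH : H = !![α, β₁, starRingEnd ℂ β₃;
                 starRingEnd ℂ β₁, α, β₂;
                 β₃, starRingEnd ℂ β₂, α]) :
    H.det = (-2 * Real.sin (3 * Real.pi / p) : ℝ) := by
  have hpne : (p:ℂ) ≠ 0 := Nat.cast_ne_zero.mpr (by omega)
  have hprne : (p:ℝ) ≠ 0 := Nat.cast_ne_zero.mpr (by omega)
  set φ : ℝ := Real.pi / p with hφ
  set E := Complex.exp (-(Real.pi * Complex.I) / (3 * p)) with hE
  set F := starRingEnd ℂ E with hF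
  have hexp : ∀ x : ℝ, Complex.exp ((x:ℝ) * Complex.I)
      = (Real.cos x : ℂ) + (Real.sin x) * Complex.I := by
    intro x; rw [Complex.exp_mul_I, Complex.ofReal_cos, Complex.ofReal_sin]
  -- α
  have hu3 : u^3 = Complex.exp ((2*φ : ℝ) * Complex.I) := by
    rw [hu, ← Complex.exp_nat_mul]
    congr 1
    push_cast [hφ]
    field_simp
  have hcu3 : (starRingEnd ℂ u)^3 = Complex.exp ((-(2*φ) : ℝ) * Complex.I) := by
    rw [← map_pow, hu3, ← Complex.exp_conj, map_mul, Complex.conj_I, Complex.conj_ofReal]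
    push_cast
    ring_nf
  have hsinpos : 0 ≤ Real.sin φ := by
    apply Real.sin_nonneg_of_nonneg_of_le_pi
    · positivity
    · rw [hφ]
      apply div_le_self Real.pi_nonneg
      exact_mod_cast Nat.one_le_of_lt hp
  have hαval : α = ((2 * Real.sin φ : ℝ) : ℂ) := by
    rw [hα]
    congr 1
    have hre : ((2:ℂ) - u^3 - (starRingEnd ℂ u)^3) = ((2 - 2*Real.cos (2*φ) : ℝ) : ℂ) := by
      rw [hu3, hcu3, hexp, hexp, Real.cos_neg, Real.sin_neg]
      push_cast
      ring
    rw [hre, Complex.ofReal_re]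
    have h2 : 2 - 2*Real.cos (2*φ) = (2*Real.sin φ)^2 := by
      rw [Real.cos_two_mul']
      have := Real.sin_sq_add_cos_sq φ
      nlinarith [this]
    rw [h2, Real.sqrt_sq (by positivity)]
  -- E facts
  have hE3 : E^3 = (Real.cos φ : ℂ) - (Real.sin φ) * Complex.I := by
    rw [hE, ← Complex.exp_nat_mul]
    have harg : (3:ℕ) * (-(Real.pi * Complex.I) / (3 * p)) = ((-φ : ℝ) : ℂ) * Complex.I := by
      push_cast [hφ]
      field_simp
    rw [harg, hexp, Real.cos_neg, Real.sin_neg]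
    push_cast
    ring
  have hF3 : F^3 = (Real.cos φ : ℂ) + (Real.sin φ) * Complex.I := by
    rw [hF, ← map_pow, hE3, map_sub, map_mul, Complex.conj_ofReal, Complex.conj_ofReal,
      Complex.conj_I]
    ring
  have hEF : E * F = 1 := by
    rw [hF, hE, ← Complex.exp_conj, ← Complex.exp_add]
    have : -(↑Real.pi * Complex.I) / (3 * ↑p)
        + starRingEnd ℂ (-(↑Real.pi * Complex.I) / (3 * ↑p)) = 0 := by
      simp only [map_div₀, map_neg, map_mul, Complex.conj_I, Complex.conj_ofReal,
        map_ofNat, Complex.conj_natCast]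
      ring
    rw [this, Complex.exp_zero]
  have hs2 : (Real.sqrt 2 : ℂ) * (Real.sqrt 2 : ℂ) = 2 := by
    rw [← Complex.ofReal_mul, Real.mul_self_sqrt (by norm_num)]
    norm_num
  -- conjugates of β
  have hcb1 : starRingEnd ℂ β₁ = Complex.I * F := by
    rw [hβ₁, hρ]
    simp [map_mul, Complex.conj_I, hF]
  have hcb2 : starRingEnd ℂ β₂ = Complex.I * F * (Real.sqrt 2 : ℂ) := by
    rw [hβ₂, hσ]
    simp [map_mul, Complex.conj_I, hF, Complex.conj_ofReal]
  have hcb3 : starRingEnd ℂ β₃ = Complex.I * F * (Real.sqrt 2 : ℂ) := by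
    rw [hβ₃, hτ]
    simp [map_mul, Complex.conj_I, hF, Complex.conj_ofReal]
  -- sin triple
  have hsin3 : Real.sin (3 * Real.pi / p) = 3 * Real.sin φ - 4 * Real.sin φ ^ 3 := by
    rw [show 3 * Real.pi / p = 3 * φ by rw [hφ]; ring, Real.sin_three_mul]
  subst hH
  rw [Matrix.det_fin_three]
  simp only [Matrix.cons_val', Matrix.cons_val_zero, Matrix.cons_val_one, Matrix.head_cons,
    Matrix.empty_val', Matrix.cons_val_fin_one, Matrix.head_fin_const, Matrix.cons_val_two,
    Matrix.tail_cons, Matrix.of_apply, Matrix.cons_val_zero]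
  rw [hcb1, hcb2, hcb3, hβ₁, hβ₂, hβ₃, hρ, hσ, hτ, hαval, hsin3]
  push_cast [-Complex.ofReal_sin, -Complex.ofReal_cos]
  set s := Real.sin φ
  set c := Real.cos φ
  set w : ℂ := (Real.sqrt 2 : ℂ)
  linear_combination (4*(s:ℂ)*Complex.I^2*w^2 + 2*(s:ℂ)*Complex.I^2) * hEF
    + (4*(s:ℂ)*Complex.I^2 - Complex.I^3*E^3 + Complex.I^3*F^3) * hs2
    + (-2*Complex.I^3) * hE3 + (2*Complex.I^3) * hF3
    + (4*(s:ℂ)*Complex.I^2 + 6*(s:ℂ)) * Complex.I_sq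
end
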